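/- arXiv:1704.04903 — 5 statements merged into one kernel-verified Lean document; each statement's English description precedes it below -/
import Mathlib

section
/- For the derivations Q_i on ℤ/2[x₁,…,xₙ] defined by Q_i(x_j) = x_j^{2^{i+1}}, one has Q_i ∘ Q_i = 0 for every i. -/
/-!
In characteristic two the cross terms `2 • D a • D b` of `D (D (a * b))` vanish, so the square of
a derivation `D` is again a derivation. For `D = Q_i` it kills every variable, since `Q_i x_j` is an
even power and `D (a ^ (2 * m)) = 2 • a ^ m • D (a ^ m) = 0`; a derivation of a polynomial ring
that vanishes on the variables is zero.
-/

open MvPolynomial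

/-- The `i`-th Milnor operation as a `ℤ/2`-linear derivation on `ℤ/2[x₁,…,xₙ]`,
determined by `Q_i(x_j) = x_j^{2^{i+1}}`. -/
noncomputable def milnorQ (n k : ℕ) :
    Derivation (ZMod 2) (MvPolynomial (Fin n) (ZMod 2)) (MvPolynomial (Fin n) (ZMod 2)) :=
  MvPolynomial.mkDerivation (ZMod 2) (fun i => X i ^ (2 ^ (k + 1)))

namespace Derivation

section CharTwo

variable {R A M : Type*} [CommSemiring R] [CommRing A] [Algebra R A] [CharP A 2]

theorem map_pow_of_even [AddCommGroup M] [Module A M] [Module R M] (D : Derivation R A M)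
    {n : ℕ} (hn : Even n) (a : A) : D (a ^ n) = 0 := by
  obtain ⟨m, rfl⟩ := hn
  rw [pow_add, leibniz, ← add_smul, CharTwo.add_self_eq_zero, zero_smul]

theorem leibniz_comp_self (D : Derivation R A A) (a b : A) :
    D (D (a * b)) = a • D (D b) + b • D (D a) := by
  simp only [leibniz, map_add, smul_eq_mul]
  linear_combination (D a * D b) * CharTwo.two_eq_zero (R := A)

def compSelf (D : Derivation R A A) : Derivation R A A :=
  mk' (D.toLinearMap ∘ₗ D.toLinearMap) D.leibniz_comp_self

@[simp]
theorem compSelf_apply (D : Derivation R A A) (a : A) : D.compSelf a = D (D a) :=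
  rfl

end CharTwo

end Derivation

/-- `Q_i ∘ Q_i = 0` for every `i`. -/
theorem milnorQ_comp_self (n i : ℕ) (p : MvPolynomial (Fin n) (ZMod 2)) :
    milnorQ n i (milnorQ n i p) = 0 := by
  suffices (milnorQ n i).compSelf = 0 from congr($this p)
  ext j
  rw [Derivation.compSelf_apply, milnorQ, mkDerivation_X, Derivation.zero_apply,
    Derivation.map_pow_of_even _ ((Nat.even_pow' i.succ_ne_zero).2 even_two)]
end

section
/- For the derivations Q_i on ℤ/2[x₁,…,xₙ] defined by Q_i(x_j) = x_j^{2^{i+1}}, one has Q_i ∘ Q_j = Q_j ∘ Q_i for all i, j. -/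
open MvPolynomial

theorem Derivation.map_pow_eq_zero_of_charP_dvd {R A M : Type*} [CommSemiring R] [CommSemiring A]
    [AddCommMonoid M] [Algebra R A] [Module A M] [Module R M] [IsScalarTower R A M]
    (p : ℕ) [CharP R p] (D : Derivation R A M) (a : A) {m : ℕ} (hm : p ∣ m) :
    D (a ^ m) = 0 := by
  rw [D.leibniz_pow, ← Nat.cast_smul_eq_nsmul R, (CharP.cast_eq_zero_iff R p m).mpr hm, zero_smul]

theorem MvPolynomial.derivation_comm_of_comm_X {σ R : Type*} [CommRing R]
    {D E : Derivation R (MvPolynomial σ R) (MvPolynomial σ R)}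
    (h : ∀ i, D (E (X i)) = E (D (X i))) (f : MvPolynomial σ R) : D (E f) = E (D f) := by
  have hcomm : ⁅D, E⁆ = 0 :=
    derivation_ext fun i => by rw [Derivation.commutator_apply, h, sub_self, Derivation.zero_apply]
  rw [← sub_eq_zero, ← Derivation.commutator_apply, hcomm, Derivation.zero_apply]

/-- `Q_i ∘ Q_j = Q_j ∘ Q_i` for all `i, j`. -/
theorem milnorQ_comm (n i j : ℕ) (p : MvPolynomial (Fin n) (ZMod 2)) :
    milnorQ n i (milnorQ n j p) = milnorQ n j (milnorQ n i p) := by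
  refine derivation_comm_of_comm_X (fun x => ?_) p
  have hkill : ∀ k l, milnorQ n k (X x ^ 2 ^ (l + 1)) = 0 := fun k l =>
    Derivation.map_pow_eq_zero_of_charP_dvd 2 _ _ (dvd_pow_self 2 l.succ_ne_zero)
  simp only [milnorQ, mkDerivation_X] at hkill ⊢
  rw [hkill, hkill]
end

section
/- Let Q₀, Q₁ be the derivations on ℤ/2[x₁,…,xₙ] with Q₀(x_i) = x_i² and Q₁(x_i) = x_i⁴. Then Q₀Q₁(w_l) = m[4,2,1^{l-2}], the monomial symmetric polynomial of the partition (4,2,1,…,1) with l−2 ones, for all 2 ≤ l ≤ n. -/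
open MvPolynomial Finset

lemma derivation_prod {ι R A : Type*} [DecidableEq ι] [CommRing R] [CommRing A] [Algebra R A]
    (D : Derivation R A A) (s : Finset ι) (g : ι → A) :
    D (∏ j ∈ s, g j) = ∑ i ∈ s, D (g i) * ∏ j ∈ s.erase i, g j := by
  induction s using Finset.induction with
  | empty => simp
  | @insert a s ha ih =>
    rw [Finset.prod_insert ha, D.leibniz, ih, smul_eq_mul, smul_eq_mul,
      Finset.sum_insert ha, Finset.erase_insert ha, Finset.mul_sum,
      add_comm (∑ i ∈ s, g a * (D (g i) * ∏ j ∈ s.erase i, g j)), mul_comm (∏ j ∈ s, g j)]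
    congr 1
    refine Finset.sum_congr rfl fun i hi => ?_
    rw [Finset.erase_insert_of_ne (by rintro rfl; exact ha hi),
      Finset.prod_insert (fun h => ha (Finset.mem_of_mem_erase h))]
    ring

lemma key_reindex {M : Type*} [AddCommMonoid M] {n l : ℕ} (hl : 2 ≤ l)
    (f : Fin n → Fin n → Finset (Fin n) → M) :
    ∑ t ∈ powersetCard l (univ : Finset (Fin n)), ∑ i ∈ t, ∑ i' ∈ t.erase i,
        f i i' ((t.erase i).erase i')
      = ∑ i : Fin n, ∑ i' ∈ univ.erase i,
        ∑ s ∈ powersetCard (l - 2) ((univ.erase i).erase i'), f i i' s := by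
  rw [Finset.sum_sigma', Finset.sum_sigma', Finset.sum_sigma', Finset.sum_sigma']
  refine Finset.sum_nbij' (fun p => ⟨⟨p.1.2, p.2⟩, (p.1.1.erase p.1.2).erase p.2⟩)
    (fun q => ⟨⟨insert q.1.1 (insert q.1.2 q.2), q.1.1⟩, q.1.2⟩) ?_ ?_ ?_ ?_ ?_
  · rintro ⟨⟨t, i⟩, i'⟩ hp
    simp only [Finset.mem_sigma, Finset.mem_powersetCard] at hp ⊢
    obtain ⟨⟨htu, hi⟩, hi'⟩ := hp
    obtain ⟨hne, hi't⟩ := Finset.mem_erase.1 hi'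
    refine ⟨⟨Finset.mem_univ _, Finset.mem_erase.2 ⟨hne, Finset.mem_univ _⟩⟩,
      fun j hj => ?_, ?_⟩
    · simp only [Finset.mem_erase] at hj ⊢
      exact ⟨hj.1, hj.2.1, Finset.mem_univ j⟩
    · rw [Finset.card_erase_of_mem hi', Finset.card_erase_of_mem hi, htu.2]
      omega
  · rintro ⟨⟨i, i'⟩, s⟩ hq
    simp only [Finset.mem_sigma, Finset.mem_powersetCard, Finset.mem_erase] at hq ⊢
    obtain ⟨⟨-, hne, -⟩, hs, hcard⟩ := hq
    have hi's : i' ∉ s := fun h => ((Finset.mem_erase.1 (hs h)).1) rfl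
    have his : i ∉ s := fun h => ((Finset.mem_erase.1 (Finset.mem_of_mem_erase (hs h))).1) rfl
    have hii : i ∉ insert i' s := by
      simp only [Finset.mem_insert]
      rintro (rfl | h); exacts [hne rfl, his h]
    refine ⟨⟨⟨fun j _ => Finset.mem_univ j, ?_⟩, Finset.mem_insert_self _ _⟩, hne,
      Finset.mem_insert_of_mem (Finset.mem_insert_self _ _)⟩
    rw [Finset.card_insert_of_notMem hii, Finset.card_insert_of_notMem hi's, hcard]
    omega
  · rintro ⟨⟨t, i⟩, i'⟩ hp
    simp only [Finset.mem_sigma, Finset.mem_powersetCard] at hp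
    obtain ⟨⟨-, hi⟩, hi'⟩ := hp
    have h1 : insert i' ((t.erase i).erase i') = t.erase i := Finset.insert_erase hi'
    have h2 : insert i (t.erase i) = t := Finset.insert_erase hi
    simp [h1, h2]
  · rintro ⟨⟨i, i'⟩, s⟩ hq
    simp only [Finset.mem_sigma, Finset.mem_powersetCard, Finset.mem_erase] at hq
    obtain ⟨⟨-, hne, -⟩, hs, -⟩ := hq
    have hi's : i' ∉ s := fun h => ((Finset.mem_erase.1 (hs h)).1) rfl
    have his : i ∉ s := fun h => ((Finset.mem_erase.1 (Finset.mem_of_mem_erase (hs h))).1) rfl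
    have hii : i ∉ insert i' s := by
      simp only [Finset.mem_insert]
      rintro (rfl | h); exacts [hne rfl, his h]
    simp [Finset.erase_insert hii, Finset.erase_insert hi's]
  · rintro ⟨⟨t, i⟩, i'⟩ _; rfl


/-- `Q₀Q₁(w_l) = m[4,2,1^{l-2}]`: applying `Q₀ ∘ Q₁` to the `l`-th elementary symmetric
polynomial gives the monomial symmetric polynomial of the partition `(4,2,1,…,1)` with
`l-2` ones, i.e. the sum over all choices of distinct indices `i ≠ i'` and an `(l-2)`-element
set `s` of further distinct indices of `x_i⁴ x_{i'}² ∏_{j∈s} x_j`. -/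
theorem milnorQ0_milnorQ1_esymm (n l : ℕ) (hl : 2 ≤ l) (hln : l ≤ n) :
    milnorQ n 0 (milnorQ n 1 (MvPolynomial.esymm (Fin n) (ZMod 2) l)) =
      ∑ i : Fin n, ∑ i' ∈ Finset.univ.erase i,
        ∑ s ∈ Finset.powersetCard (l - 2) ((Finset.univ.erase i).erase i'),
          (X i : MvPolynomial (Fin n) (ZMod 2)) ^ 4 * X i' ^ 2 * ∏ j ∈ s, X j := by
  have hX1 : ∀ i : Fin n, milnorQ n 1 (X i) = X i ^ 4 := fun i => by
    simp [milnorQ, MvPolynomial.mkDerivation_X]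
  have hX0 : ∀ i : Fin n, milnorQ n 0 (X i) = X i ^ 2 := fun i => by
    simp [milnorQ, MvPolynomial.mkDerivation_X]
  have hsq : ∀ y : MvPolynomial (Fin n) (ZMod 2), milnorQ n 0 (y * y) = 0 := fun y => by
    rw [Derivation.leibniz]; exact CharTwo.add_self_eq_zero _
  have hpow4 : ∀ i : Fin n, milnorQ n 0 ((X i : MvPolynomial (Fin n) (ZMod 2)) ^ 4) = 0 :=
    fun i => by
      rw [show (X i : MvPolynomial (Fin n) (ZMod 2)) ^ 4 = X i ^ 2 * (X i ^ 2) by ring]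
      exact hsq _
  calc milnorQ n 0 (milnorQ n 1 (MvPolynomial.esymm (Fin n) (ZMod 2) l))
      = ∑ t ∈ powersetCard l (univ : Finset (Fin n)), ∑ i ∈ t, ∑ i' ∈ t.erase i,
          (X i : MvPolynomial (Fin n) (ZMod 2)) ^ 4 * X i' ^ 2 *
            ∏ j ∈ (t.erase i).erase i', X j := by
        rw [MvPolynomial.esymm, map_sum, map_sum]
        refine Finset.sum_congr rfl fun t _ => ?_
        rw [derivation_prod, map_sum]
        refine Finset.sum_congr rfl fun i _ => ?_
        rw [hX1, Derivation.leibniz, hpow4, smul_zero, add_zero, smul_eq_mul,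
          derivation_prod, Finset.mul_sum]
        refine Finset.sum_congr rfl fun i' _ => ?_
        rw [hX0, mul_assoc]
    _ = _ := key_reindex hl fun i i' s =>
          (X i : MvPolynomial (Fin n) (ZMod 2)) ^ 4 * X i' ^ 2 * ∏ j ∈ s, X j
end

section
/- Let k be algebraically closed of characteristic ≠ 2 and q(v) = Σ v_i² on kⁿ. The stabilizer in 𝔾_m × SO_n of the vector e₁ equals the image of the embedding O_{n-1} → 𝔾_m × SO_n given by g ↦ (det g, diag(det g, g)), hence is isomorphic to O_{n-1}. -/
open Matrix

/-! If `t • A e₁ = e₁` with `A` orthogonal, then `e₁` is an eigenvector of `A` (eigenvalue `t⁻¹`)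
and hence of `Aᵀ = A⁻¹` (eigenvalue `t`), so the first row and column of `A` vanish off the
diagonal and `A = diag(t, g)`. Orthogonality of `A` then says `t² = 1` and `g ∈ O_{n-1}`, and
`det A = t · det g = 1` forces `det g = t`. -/

namespace Matrix

theorem sumElim_one_zero_eq_single {R m : Type*} [Zero R] [One R] [DecidableEq m] :
    Sum.elim (fun _ : Fin 1 => (1 : R)) (fun _ : m => 0) = Pi.single (Sum.inl 0) 1 := by
  ext (i | i)
  · simp [Subsingleton.elim i 0]
  · simp

variable {R : Type*} [CommRing R] {l m : Type*} [Fintype l] [DecidableEq l] [Fintype m]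
  [DecidableEq m]

theorem fromBlocks_zero_mem_orthogonalGroup_iff {A : Matrix l l R} {D : Matrix m m R} :
    fromBlocks A 0 0 D ∈ orthogonalGroup (l ⊕ m) R ↔
      A ∈ orthogonalGroup l R ∧ D ∈ orthogonalGroup m R := by
  simp [mem_orthogonalGroup_iff, fromBlocks_transpose, fromBlocks_multiply, ← fromBlocks_one]

theorem diagonal_const_mem_orthogonalGroup_iff [Nonempty l] {a : R} :
    diagonal (fun _ : l => a) ∈ orthogonalGroup l R ↔ a * a = 1 := by
  simp only [mem_orthogonalGroup_iff, diagonal_transpose, diagonal_mul_diagonal, ← diagonal_one,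
    diagonal_eq_diagonal_iff, forall_const]

theorem det_mul_self_of_mem_orthogonalGroup {A : Matrix l l R} (hA : A ∈ orthogonalGroup l R) :
    A.det * A.det = 1 := by
  simpa [det_transpose] using congrArg det ((mem_orthogonalGroup_iff' _ _).mp hA)

theorem eq_fromBlocks_of_smul_mulVec_single {A : Matrix (Fin 1 ⊕ m) (Fin 1 ⊕ m) R}
    (hA : A ∈ orthogonalGroup (Fin 1 ⊕ m) R) {t : Rˣ}
    (ht : (t : R) • A *ᵥ Pi.single (Sum.inl 0) 1 = Pi.single (Sum.inl 0) 1) :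
    A = fromBlocks (diagonal fun _ => (t : R)) 0 0 A.toBlocks₂₂ := by
  set e : Fin 1 ⊕ m → R := Pi.single (Sum.inl 0) 1
  have hcol : A *ᵥ e = (↑t⁻¹ : R) • e := by
    conv_rhs => rw [← ht]
    rw [smul_smul, Units.inv_mul, one_smul]
  have hrow : Aᵀ *ᵥ e = (t : R) • e := by
    conv_lhs => rw [← ht]
    rw [mulVec_smul, mulVec_mulVec, (mem_orthogonalGroup_iff' _ _).mp hA, one_mulVec]
  ext (i | i) (j | j)
  · simpa [e, mulVec_single_one, Subsingleton.elim i 0, Subsingleton.elim j 0]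
      using congrFun hrow (Sum.inl 0)
  · simpa [e, mulVec_single_one, Subsingleton.elim i 0] using congrFun hrow (Sum.inr j)
  · simpa [e, mulVec_single_one, Subsingleton.elim j 0] using congrFun hcol (Sum.inr i)
  · rfl

theorem fromBlocks_diagonal_mulVec_single (a : R) (D : Matrix m m R) :
    fromBlocks (diagonal fun _ : Fin 1 => a) 0 0 D *ᵥ Pi.single (Sum.inl 0) 1 =
      a • Pi.single (Sum.inl 0) 1 := by
  ext (i | i)
  · simp [Subsingleton.elim i 0]
  · simp

end Matrix

theorem stabilizer_e1_eq_image_orthogonal_general (k : Type*) [Field k] (n : ℕ) :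
    {p : kˣ × Matrix (Fin 1 ⊕ Fin (n - 1)) (Fin 1 ⊕ Fin (n - 1)) k |
        p.2 ∈ Matrix.specialOrthogonalGroup (Fin 1 ⊕ Fin (n - 1)) k ∧
          (p.1 : k) • p.2.mulVec (Sum.elim (fun _ => (1 : k)) (fun _ => (0 : k))) =
            Sum.elim (fun _ => (1 : k)) (fun _ => (0 : k))} =
      {p : kˣ × Matrix (Fin 1 ⊕ Fin (n - 1)) (Fin 1 ⊕ Fin (n - 1)) k |
        ∃ g ∈ Matrix.orthogonalGroup (Fin (n - 1)) k,
          (p.1 : k) = g.det ∧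
            p.2 = Matrix.fromBlocks (Matrix.diagonal fun _ => g.det) 0 0 g} := by
  rw [sumElim_one_zero_eq_single]
  ext ⟨t, A⟩
  simp only [Set.mem_ofPred_eq, mem_specialOrthogonalGroup_iff]
  constructor
  · rintro ⟨⟨hA, hdet⟩, ht⟩
    have hblock := eq_fromBlocks_of_smul_mulVec_single hA ht
    rw [hblock, fromBlocks_zero_mem_orthogonalGroup_iff,
      diagonal_const_mem_orthogonalGroup_iff] at hA
    rw [hblock, det_fromBlocks_zero₂₁, det_diagonal, Fin.prod_const, pow_one] at hdet
    have ht_eq : (t : k) = A.toBlocks₂₂.det := by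
      linear_combination (-(t : k)) * hdet + A.toBlocks₂₂.det * hA.1
    exact ⟨A.toBlocks₂₂, hA.2, ht_eq, ht_eq ▸ hblock⟩
  · rintro ⟨g, hg, ht, rfl⟩
    have hdet := det_mul_self_of_mem_orthogonalGroup hg
    refine ⟨⟨?_, ?_⟩, ?_⟩
    · rw [fromBlocks_zero_mem_orthogonalGroup_iff, diagonal_const_mem_orthogonalGroup_iff]
      exact ⟨hdet, hg⟩
    · rw [det_fromBlocks_zero₂₁, det_diagonal, Fin.prod_const, pow_one, hdet]
    · rw [fromBlocks_diagonal_mulVec_single, smul_smul, ht, hdet, one_smul]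

/-- Over an algebraically closed field `k` of characteristic `≠ 2`, the stabilizer in
`𝔾_m × SO_n` of the first standard basis vector `e₁` (for the action `(t,h)·v = t·(h v)`)
equals the image of the embedding `O_{n-1} → 𝔾_m × SO_n`, `g ↦ (det g, diag(det g, g))`.
Here the index set of `SO_n` is `Fin 1 ⊕ Fin (n-1)` and `e₁ = Sum.elim (fun _ => 1) (fun _ => 0)`. -/
theorem stabilizer_e1_eq_image_orthogonal (k : Type*) [Field k] [IsAlgClosed k]
    (hk : ringChar k ≠ 2) (n : ℕ) :
    {p : kˣ × Matrix (Fin 1 ⊕ Fin (n - 1)) (Fin 1 ⊕ Fin (n - 1)) k |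
        p.2 ∈ Matrix.specialOrthogonalGroup (Fin 1 ⊕ Fin (n - 1)) k ∧
          (p.1 : k) • p.2.mulVec (Sum.elim (fun _ => (1 : k)) (fun _ => (0 : k))) =
            Sum.elim (fun _ => (1 : k)) (fun _ => (0 : k))} =
      {p : kˣ × Matrix (Fin 1 ⊕ Fin (n - 1)) (Fin 1 ⊕ Fin (n - 1)) k |
        ∃ g ∈ Matrix.orthogonalGroup (Fin (n - 1)) k,
          (p.1 : k) = g.det ∧
            p.2 = Matrix.fromBlocks (Matrix.diagonal fun _ => g.det) 0 0 g} :=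
  stabilizer_e1_eq_image_orthogonal_general k n
end

section
/- Let φ : ℤ/2[w₂,…,wₙ] → ℤ/2[w₁,…,w_{n-1}] be the ℤ/2-algebra homomorphism sending w_i ↦ w_i + w₁w_{i-1} for 2 ≤ i ≤ n−1 and wₙ ↦ w₁w_{n-1}. Then φ is injective. -/
/-!
Send the variables `x₀, …, x_m` of the target (`x_j = w_{j+1}`) into `(ℤ/2[z₀, …, z_{m-1}])[T]`
by `x_j ↦ g_j`, where `g₀ = T` and `g_{j+1} = T g_j + z_j`. In characteristic `2` the variable
`y_i = w_{i+2}` of the source is then sent to `g_{i+1} + T g_i = z_i` for `i < m`, and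
`y_m = w_n` to `T g_m`, a monic polynomial of positive degree in `T`, hence transcendental over
`ℤ/2[z₀, …, z_{m-1}]`. So the composite is injective, and therefore so is `φ`.
-/

open MvPolynomial

/-- The homomorphism `t(κ*) : ℤ/2[w₂,…,wₙ] → ℤ/2[w₁,…,w_{n-1}]` (with `n = m + 2`),
sending `wᵢ ↦ wᵢ + w₁w_{i-1}` for `2 ≤ i ≤ n-1` and `wₙ ↦ w₁w_{n-1}`.
The domain has variables indexed by `Fin (m+1)` where index `i` stands for `w_{i+2}`,
and the codomain has variables indexed by `Fin (m+1)` where index `j` stands for `w_{j+1}`. -/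
noncomputable def kappaStar (m : ℕ) :
    MvPolynomial (Fin (m + 1)) (ZMod 2) →ₐ[ZMod 2] MvPolynomial (Fin (m + 1)) (ZMod 2) :=
  MvPolynomial.aeval (fun i : Fin (m + 1) =>
    if h : (i : ℕ) + 1 < m + 1 then X (⟨(i : ℕ) + 1, h⟩ : Fin (m + 1)) + X 0 * X i
    else X 0 * X i)

namespace Polynomial

variable {S : Type*} [CommSemiring S]

noncomputable def hornerPoly (c : ℕ → S) : ℕ → S[X]
  | 0 => X
  | i + 1 => X * hornerPoly c i + C (c i)

@[simp]
theorem hornerPoly_zero (c : ℕ → S) : hornerPoly c 0 = X := rfl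

theorem monic_hornerPoly [Nontrivial S] (c : ℕ → S) (i : ℕ) : (hornerPoly c i).Monic := by
  induction i with
  | zero => exact monic_X
  | succ i ih =>
    refine (monic_X.mul ih).add_of_left (degree_C_lt.trans_le ?_)
    rw [ih.degree_mul, degree_X]
    exact le_add_of_nonneg_right (zero_le_degree_iff.mpr ih.ne_zero)

theorem hornerPoly_succ_add_X_mul [CharP S 2] (c : ℕ → S) (i : ℕ) :
    hornerPoly c (i + 1) + X * hornerPoly c i = C (c i) := by
  rw [hornerPoly, add_comm (X * _), add_assoc, CharTwo.add_self_eq_zero, add_zero]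

theorem Monic.transcendental_X_mul {R : Type*} [CommRing R] [Nontrivial R] {p : R[X]}
    (hp : p.Monic) : Transcendental R (X * p) :=
  Polynomial.transcendental _ (by simp [natDegree_X_mul hp.ne_zero])
    (by rw [(monic_X.mul hp).leadingCoeff]; exact one_mem _)

end Polynomial

namespace MvPolynomial

theorem aeval_option_elim_injective {R σ : Type*} [CommRing R]
    {f : Polynomial (MvPolynomial σ R)} (hf : Transcendental (MvPolynomial σ R) f) :
    Function.Injective
      (aeval (R := R) fun o : Option σ => o.elim f fun i => Polynomial.C (X i)) := by
  have h : aeval (R := R) (fun o : Option σ => o.elim f fun i => Polynomial.C (X i)) =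
      ((Polynomial.aeval f).restrictScalars R).comp (optionEquivLeft R σ).toAlgHom := by
    refine algHom_ext fun o => ?_
    cases o <;> simp [optionEquivLeft_X_none, optionEquivLeft_X_some]
  rw [h]
  exact (transcendental_iff_injective.mp hf).comp (optionEquivLeft R σ).injective

end MvPolynomial

open Polynomial (hornerPoly hornerPoly_succ_add_X_mul monic_hornerPoly)

noncomputable def extendVars (m k : ℕ) : MvPolynomial (Fin m) (ZMod 2) :=
  if h : k < m then X ⟨k, h⟩ else 0

noncomputable def hornerSubst (m : ℕ) :
    MvPolynomial (Fin (m + 1)) (ZMod 2) →ₐ[ZMod 2] Polynomial (MvPolynomial (Fin m) (ZMod 2)) :=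
  aeval fun j => hornerPoly (extendVars m) j

theorem hornerSubst_comp_kappaStar (m : ℕ) :
    (hornerSubst m).comp (kappaStar m) =
      (aeval fun o : Option (Fin m) => o.elim (Polynomial.X * hornerPoly (extendVars m) m)
          fun i => Polynomial.C (X i)).comp (rename finSuccEquivLast) := by
  refine algHom_ext fun j => ?_
  induction j using Fin.lastCases with
  | last => simp [kappaStar, hornerSubst]
  | cast i => simp [kappaStar, hornerSubst, hornerPoly_succ_add_X_mul, extendVars]

/-- The homomorphism `φ = t(κ*) : ℤ/2[w₂,…,wₙ] → ℤ/2[w₁,…,w_{n-1}]`,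
`wᵢ ↦ wᵢ + w₁w_{i-1}` (for `2 ≤ i ≤ n-1`), `wₙ ↦ w₁w_{n-1}`, is injective. -/
theorem kappaStar_injective (m : ℕ) :
    Function.Injective (kappaStar m) := by
  have h : Function.Injective ((hornerSubst m).comp (kappaStar m)) := by
    rw [hornerSubst_comp_kappaStar, AlgHom.coe_comp]
    exact (aeval_option_elim_injective (monic_hornerPoly _ m).transcendental_X_mul).comp
      (rename_injective _ finSuccEquivLast.injective)
  exact Function.Injective.of_comp (f := hornerSubst m) h
end
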